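/- Fix reals L < H. There is no mechanism (A,p) on the two-values domain Θ = {L,H}^4 for the path auction on the diamond network (A selecting a minimum-cost path) that is immune to coalitions of size at most three with a single misreporting member; that is, for every such A and every p there exist θ ∈ Θ, a coalition C ⊆ {1,2,3,4} with |C| ≤ 3, an agent i ∈ C, and θ̂_i ∈ {L,H} such that Σ_{k∈C} u_k(θ; θ_k) < Σ_{k∈C} u_k((θ̂_i, θ_{−i}); θ_k). -/
import Mathlib


open Function Finset

noncomputable section

/-- Utility of agent `i` with true per-unit cost `t` when the reported vector is `θhat`. -/
def utility {n : ℕ} (A p : (Fin n → ℝ) → Fin n → ℝ) (θhat : Fin n → ℝ) (i : Fin n) (t : ℝ) : ℝ :=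
  p θhat i - A θhat i * t

/-- `θ` belongs to the product domain `Θ = Θ_1 × ⋯ × Θ_n`. -/
def InDomain {n : ℕ} (Θ : Fin n → Set ℝ) (θ : Fin n → ℝ) : Prop := ∀ k, θ k ∈ Θ k

/-- Bribeproofness: no agent `j` can bribe an agent `i` into a unilateral misreport
so that their joint utility improves (taking `i = j` gives strategyproofness). -/
def Bribeproof {n : ℕ} (Θ : Fin n → Set ℝ) (A p : (Fin n → ℝ) → Fin n → ℝ) : Prop :=
  ∀ θ, InDomain Θ θ → ∀ i j : Fin n, ∀ x ∈ Θ i,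
    utility A p θ i (θ i) + utility A p θ j (θ j) ≥
      utility A p (Function.update θ i x) i (θ i) +
        utility A p (Function.update θ i x) j (θ j)

/-- Strong bribeproofness: additionally no two distinct agents can jointly misreport
so that their joint utility improves. -/
def StronglyBribeproof {n : ℕ} (Θ : Fin n → Set ℝ) (A p : (Fin n → ℝ) → Fin n → ℝ) : Prop :=
  Bribeproof Θ A p ∧
    ∀ θ, InDomain Θ θ → ∀ i j : Fin n, i ≠ j → ∀ x ∈ Θ i, ∀ y ∈ Θ j,
      utility A p θ i (θ i) + utility A p θ j (θ j) ≥
        utility A p (Function.update (Function.update θ i x) j y) i (θ i) +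
          utility A p (Function.update (Function.update θ i x) j y) j (θ j)

/-- Collusion-proofness: no coalition `C` can improve its total utility by a joint
misreport of the types of (some of) its members. -/
def CollusionProof {n : ℕ} (Θ : Fin n → Set ℝ) (A p : (Fin n → ℝ) → Fin n → ℝ) : Prop :=
  ∀ θ, InDomain Θ θ → ∀ C : Finset (Fin n), ∀ θhat, InDomain Θ θhat →
    (∀ k, k ∉ C → θhat k = θ k) →
    ∑ i ∈ C, utility A p θ i (θ i) ≥ ∑ i ∈ C, utility A p θhat i (θ i)

/-- `Δ^i_k(θ_{-i}) = A_k(L, θ_{-i}) - A_k(H, θ_{-i})`. -/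
def Delta {n : ℕ} (A : (Fin n → ℝ) → Fin n → ℝ) (L H : ℝ) (θ : Fin n → ℝ) (i k : Fin n) : ℝ :=
  A (Function.update θ i L) k - A (Function.update θ i H) k

lemma upd0 (a b c d x : ℝ) : Function.update ![a,b,c,d] (0:Fin 4) x = ![x,b,c,d] := by
  funext j; fin_cases j <;> simp [Function.update]
lemma upd1 (a b c d x : ℝ) : Function.update ![a,b,c,d] (1:Fin 4) x = ![a,x,c,d] := by
  funext j; fin_cases j <;> simp [Function.update]
lemma upd2 (a b c d x : ℝ) : Function.update ![a,b,c,d] (2:Fin 4) x = ![a,b,x,d] := by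
  funext j; fin_cases j <;> simp [Function.update]
lemma upd3 (a b c d x : ℝ) : Function.update ![a,b,c,d] (3:Fin 4) x = ![a,b,c,x] := by
  funext j; fin_cases j <;> simp [Function.update]
lemma sum01 (f : Fin 4 → ℝ) : ∑ k ∈ ({0,1} : Finset (Fin 4)), f k = f 0 + f 1 := by
  rw [Finset.sum_insert (by decide), Finset.sum_singleton]
lemma sum02 (f : Fin 4 → ℝ) : ∑ k ∈ ({0,2} : Finset (Fin 4)), f k = f 0 + f 2 := by
  rw [Finset.sum_insert (by decide), Finset.sum_singleton]
lemma sum03 (f : Fin 4 → ℝ) : ∑ k ∈ ({0,3} : Finset (Fin 4)), f k = f 0 + f 3 := by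
  rw [Finset.sum_insert (by decide), Finset.sum_singleton]
lemma sum12 (f : Fin 4 → ℝ) : ∑ k ∈ ({1,2} : Finset (Fin 4)), f k = f 1 + f 2 := by
  rw [Finset.sum_insert (by decide), Finset.sum_singleton]
lemma sum13 (f : Fin 4 → ℝ) : ∑ k ∈ ({1,3} : Finset (Fin 4)), f k = f 1 + f 3 := by
  rw [Finset.sum_insert (by decide), Finset.sum_singleton]
lemma sum23 (f : Fin 4 → ℝ) : ∑ k ∈ ({2,3} : Finset (Fin 4)), f k = f 2 + f 3 := by
  rw [Finset.sum_insert (by decide), Finset.sum_singleton]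
lemma sum012 (f : Fin 4 → ℝ) : ∑ k ∈ ({0,1,2} : Finset (Fin 4)), f k = f 0 + f 1 + f 2 := by
  rw [Finset.sum_insert (by decide), Finset.sum_insert (by decide), Finset.sum_singleton]; ring
lemma sum013 (f : Fin 4 → ℝ) : ∑ k ∈ ({0,1,3} : Finset (Fin 4)), f k = f 0 + f 1 + f 3 := by
  rw [Finset.sum_insert (by decide), Finset.sum_insert (by decide), Finset.sum_singleton]; ring
lemma sum023 (f : Fin 4 → ℝ) : ∑ k ∈ ({0,2,3} : Finset (Fin 4)), f k = f 0 + f 2 + f 3 := by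
  rw [Finset.sum_insert (by decide), Finset.sum_insert (by decide), Finset.sum_singleton]; ring
lemma sum123 (f : Fin 4 → ℝ) : ∑ k ∈ ({1,2,3} : Finset (Fin 4)), f k = f 1 + f 2 + f 3 := by
  rw [Finset.sum_insert (by decide), Finset.sum_insert (by decide), Finset.sum_singleton]; ring

theorem stmt_9 (L H : ℝ) (hLH : L < H)
    (A p : (Fin 4 → ℝ) → Fin 4 → ℝ)
    (hfeas : ∀ θ, InDomain (fun _ => ({L, H} : Set ℝ)) θ →
      A θ = (![1, 1, 0, 0] : Fin 4 → ℝ) ∨ A θ = (![0, 0, 1, 1] : Fin 4 → ℝ))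
    (hupper : ∀ θ, InDomain (fun _ => ({L, H} : Set ℝ)) θ →
      θ 0 + θ 1 < θ 2 + θ 3 → A θ = (![1, 1, 0, 0] : Fin 4 → ℝ))
    (hlower : ∀ θ, InDomain (fun _ => ({L, H} : Set ℝ)) θ →
      θ 2 + θ 3 < θ 0 + θ 1 → A θ = (![0, 0, 1, 1] : Fin 4 → ℝ)) :
    ∃ θ, InDomain (fun _ => ({L, H} : Set ℝ)) θ ∧
      ∃ C : Finset (Fin 4), C.card ≤ 3 ∧ ∃ i ∈ C, ∃ x ∈ ({L, H} : Set ℝ),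
        ∑ k ∈ C, utility A p θ k (θ k) <
          ∑ k ∈ C, utility A p (Function.update θ i x) k (θ k) := by
  by_contra hcon
  push_neg at hcon
  have d0000 : InDomain (fun _ => ({L, H} : Set ℝ)) ![L,L,L,L] := by intro k; fin_cases k <;> simp
  have d0001 : InDomain (fun _ => ({L, H} : Set ℝ)) ![L,L,L,H] := by intro k; fin_cases k <;> simp
  have d0010 : InDomain (fun _ => ({L, H} : Set ℝ)) ![L,L,H,L] := by intro k; fin_cases k <;> simp
  have d0011 : InDomain (fun _ => ({L, H} : Set ℝ)) ![L,L,H,H] := by intro k; fin_cases k <;> simp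
  have d0100 : InDomain (fun _ => ({L, H} : Set ℝ)) ![L,H,L,L] := by intro k; fin_cases k <;> simp
  have d0101 : InDomain (fun _ => ({L, H} : Set ℝ)) ![L,H,L,H] := by intro k; fin_cases k <;> simp
  have d0110 : InDomain (fun _ => ({L, H} : Set ℝ)) ![L,H,H,L] := by intro k; fin_cases k <;> simp
  have d0111 : InDomain (fun _ => ({L, H} : Set ℝ)) ![L,H,H,H] := by intro k; fin_cases k <;> simp
  have d1000 : InDomain (fun _ => ({L, H} : Set ℝ)) ![H,L,L,L] := by intro k; fin_cases k <;> simp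
  have d1001 : InDomain (fun _ => ({L, H} : Set ℝ)) ![H,L,L,H] := by intro k; fin_cases k <;> simp
  have d1010 : InDomain (fun _ => ({L, H} : Set ℝ)) ![H,L,H,L] := by intro k; fin_cases k <;> simp
  have d1011 : InDomain (fun _ => ({L, H} : Set ℝ)) ![H,L,H,H] := by intro k; fin_cases k <;> simp
  have d1100 : InDomain (fun _ => ({L, H} : Set ℝ)) ![H,H,L,L] := by intro k; fin_cases k <;> simp
  have d1101 : InDomain (fun _ => ({L, H} : Set ℝ)) ![H,H,L,H] := by intro k; fin_cases k <;> simp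
  have d1110 : InDomain (fun _ => ({L, H} : Set ℝ)) ![H,H,H,L] := by intro k; fin_cases k <;> simp
  have d1111 : InDomain (fun _ => ({L, H} : Set ℝ)) ![H,H,H,H] := by intro k; fin_cases k <;> simp
  have a0001 : A ![L,L,L,H] = ![1,1,0,0] := hupper ![L,L,L,H] d0001 (by simp only [Matrix.cons_val_zero, Matrix.cons_val_one, Matrix.head_cons, Matrix.cons_val_two, Matrix.cons_val_three, Matrix.tail_cons]; linarith)
  have a0010 : A ![L,L,H,L] = ![1,1,0,0] := hupper ![L,L,H,L] d0010 (by simp only [Matrix.cons_val_zero, Matrix.cons_val_one, Matrix.head_cons, Matrix.cons_val_two, Matrix.cons_val_three, Matrix.tail_cons]; linarith)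
  have a0011 : A ![L,L,H,H] = ![1,1,0,0] := hupper ![L,L,H,H] d0011 (by simp only [Matrix.cons_val_zero, Matrix.cons_val_one, Matrix.head_cons, Matrix.cons_val_two, Matrix.cons_val_three, Matrix.tail_cons]; linarith)
  have a0100 : A ![L,H,L,L] = ![0,0,1,1] := hlower ![L,H,L,L] d0100 (by simp only [Matrix.cons_val_zero, Matrix.cons_val_one, Matrix.head_cons, Matrix.cons_val_two, Matrix.cons_val_three, Matrix.tail_cons]; linarith)
  have a0111 : A ![L,H,H,H] = ![1,1,0,0] := hupper ![L,H,H,H] d0111 (by simp only [Matrix.cons_val_zero, Matrix.cons_val_one, Matrix.head_cons, Matrix.cons_val_two, Matrix.cons_val_three, Matrix.tail_cons]; linarith)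
  have a1000 : A ![H,L,L,L] = ![0,0,1,1] := hlower ![H,L,L,L] d1000 (by simp only [Matrix.cons_val_zero, Matrix.cons_val_one, Matrix.head_cons, Matrix.cons_val_two, Matrix.cons_val_three, Matrix.tail_cons]; linarith)
  have a1011 : A ![H,L,H,H] = ![1,1,0,0] := hupper ![H,L,H,H] d1011 (by simp only [Matrix.cons_val_zero, Matrix.cons_val_one, Matrix.head_cons, Matrix.cons_val_two, Matrix.cons_val_three, Matrix.tail_cons]; linarith)
  have a1100 : A ![H,H,L,L] = ![0,0,1,1] := hlower ![H,H,L,L] d1100 (by simp only [Matrix.cons_val_zero, Matrix.cons_val_one, Matrix.head_cons, Matrix.cons_val_two, Matrix.cons_val_three, Matrix.tail_cons]; linarith)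
  have a1101 : A ![H,H,L,H] = ![0,0,1,1] := hlower ![H,H,L,H] d1101 (by simp only [Matrix.cons_val_zero, Matrix.cons_val_one, Matrix.head_cons, Matrix.cons_val_two, Matrix.cons_val_three, Matrix.tail_cons]; linarith)
  have a1110 : A ![H,H,H,L] = ![0,0,1,1] := hlower ![H,H,H,L] d1110 (by simp only [Matrix.cons_val_zero, Matrix.cons_val_one, Matrix.head_cons, Matrix.cons_val_two, Matrix.cons_val_three, Matrix.tail_cons]; linarith)
  rcases hfeas ![L,H,H,L] d0110 with a0110 | a0110
  · rcases hfeas ![H,L,L,H] d1001 with a1001 | a1001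
    · have hc0 := hcon ![L,L,L,H] d0001 ({0} : Finset (Fin 4)) (by decide) 0 (by decide) H (by simp)
      rw [upd0] at hc0
      have hc1 := hcon ![H,L,L,L] d1000 ({0,1} : Finset (Fin 4)) (by decide) 1 (by decide) H (by simp)
      rw [upd1] at hc1
      have hc2 := hcon ![H,H,L,L] d1100 ({0} : Finset (Fin 4)) (by decide) 0 (by decide) L (by simp)
      rw [upd0] at hc2
      have hc3 := hcon ![L,H,L,L] d0100 ({0,2} : Finset (Fin 4)) (by decide) 2 (by decide) H (by simp)
      rw [upd2] at hc3
      have hc4 := hcon ![H,L,L,H] d1001 ({0,1} : Finset (Fin 4)) (by decide) 1 (by decide) H (by simp)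
      rw [upd1] at hc4
      have hc5 := hcon ![L,L,H,L] d0010 ({2,3} : Finset (Fin 4)) (by decide) 3 (by decide) H (by simp)
      rw [upd3] at hc5
      have hc6 := hcon ![L,L,H,H] d0011 ({1,3} : Finset (Fin 4)) (by decide) 3 (by decide) L (by simp)
      rw [upd3] at hc6
      have hc7 := hcon ![L,L,L,H] d0001 ({0,1,2} : Finset (Fin 4)) (by decide) 0 (by decide) H (by simp)
      rw [upd0] at hc7
      have hc8 := hcon ![L,L,H,L] d0010 ({1} : Finset (Fin 4)) (by decide) 1 (by decide) H (by simp)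
      rw [upd1] at hc8
      have hc9 := hcon ![L,H,L,L] d0100 ({0,1} : Finset (Fin 4)) (by decide) 0 (by decide) H (by simp)
      rw [upd0] at hc9
      have hc10 := hcon ![H,H,L,L] d1100 ({0,2} : Finset (Fin 4)) (by decide) 0 (by decide) L (by simp)
      rw [upd0] at hc10
      have hc11 := hcon ![L,L,H,H] d0011 ({0,2} : Finset (Fin 4)) (by decide) 2 (by decide) L (by simp)
      rw [upd2] at hc11
      have hc12 := hcon ![L,L,H,H] d0011 ({0,3} : Finset (Fin 4)) (by decide) 3 (by decide) L (by simp)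
      rw [upd3] at hc12
      have hc13 := hcon ![L,L,H,L] d0010 ({0,1,3} : Finset (Fin 4)) (by decide) 3 (by decide) H (by simp)
      rw [upd3] at hc13
      have hc14 := hcon ![H,L,L,L] d1000 ({1,3} : Finset (Fin 4)) (by decide) 3 (by decide) H (by simp)
      rw [upd3] at hc14
      have hc15 := hcon ![H,L,L,L] d1000 ({1,2} : Finset (Fin 4)) (by decide) 1 (by decide) H (by simp)
      rw [upd1] at hc15
      have hc16 := hcon ![H,H,L,L] d1100 ({1} : Finset (Fin 4)) (by decide) 1 (by decide) L (by simp)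
      rw [upd1] at hc16
      have hc17 := hcon ![H,L,L,H] d1001 ({0,1} : Finset (Fin 4)) (by decide) 0 (by decide) L (by simp)
      rw [upd0] at hc17
      have hc18 := hcon ![H,L,L,H] d1001 ({0,2,3} : Finset (Fin 4)) (by decide) 3 (by decide) L (by simp)
      rw [upd3] at hc18
      have hc19 := hcon ![L,H,H,L] d0110 ({1,2} : Finset (Fin 4)) (by decide) 2 (by decide) L (by simp)
      rw [upd2] at hc19
      have hc20 := hcon ![L,L,L,H] d0001 ({1,2} : Finset (Fin 4)) (by decide) 2 (by decide) H (by simp)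
      rw [upd2] at hc20
      have hc21 := hcon ![H,H,L,H] d1101 ({0,3} : Finset (Fin 4)) (by decide) 3 (by decide) L (by simp)
      rw [upd3] at hc21
      have hc22 := hcon ![H,H,L,H] d1101 ({1,3} : Finset (Fin 4)) (by decide) 1 (by decide) L (by simp)
      rw [upd1] at hc22
      have hc23 := hcon ![H,H,L,L] d1100 ({3} : Finset (Fin 4)) (by decide) 3 (by decide) H (by simp)
      rw [upd3] at hc23
      have hc24 := hcon ![L,H,H,L] d0110 ({1,2} : Finset (Fin 4)) (by decide) 1 (by decide) L (by simp)
      rw [upd1] at hc24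
      have hc25 := hcon ![L,H,H,L] d0110 ({0,1} : Finset (Fin 4)) (by decide) 1 (by decide) L (by simp)
      rw [upd1] at hc25
      have hc26 := hcon ![H,L,L,L] d1000 ({1,3} : Finset (Fin 4)) (by decide) 1 (by decide) H (by simp)
      rw [upd1] at hc26
      simp only [utility, Finset.sum_singleton, sum01, sum012, sum013, sum02, sum023, sum03, sum12, sum13, sum23, a0001, a0010, a0011, a0100, a0110, a1000, a1001, a1100, a1101, Matrix.cons_val_zero, Matrix.cons_val_one, Matrix.head_cons, Matrix.cons_val_two, Matrix.cons_val_three, Matrix.tail_cons, one_mul, zero_mul] at hc0 hc1 hc2 hc3 hc4 hc5 hc6 hc7 hc8 hc9 hc10 hc11 hc12 hc13 hc14 hc15 hc16 hc17 hc18 hc19 hc20 hc21 hc22 hc23 hc24 hc25 hc26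
      linarith
    · have hc0 := hcon ![L,L,H,H] d0011 ({0} : Finset (Fin 4)) (by decide) 0 (by decide) H (by simp)
      rw [upd0] at hc0
      have hc1 := hcon ![H,H,L,L] d1100 ({1,3} : Finset (Fin 4)) (by decide) 1 (by decide) L (by simp)
      rw [upd1] at hc1
      have hc2 := hcon ![H,L,L,H] d1001 ({1,2} : Finset (Fin 4)) (by decide) 2 (by decide) H (by simp)
      rw [upd2] at hc2
      have hc3 := hcon ![L,L,H,L] d0010 ({1,3} : Finset (Fin 4)) (by decide) 1 (by decide) H (by simp)
      rw [upd1] at hc3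
      have hc4 := hcon ![L,L,H,H] d0011 ({1,3} : Finset (Fin 4)) (by decide) 3 (by decide) L (by simp)
      rw [upd3] at hc4
      have hc5 := hcon ![H,L,L,H] d1001 ({2,3} : Finset (Fin 4)) (by decide) 2 (by decide) H (by simp)
      rw [upd2] at hc5
      have hc6 := hcon ![H,L,H,H] d1011 ({0,2} : Finset (Fin 4)) (by decide) 0 (by decide) L (by simp)
      rw [upd0] at hc6
      have hc7 := hcon ![H,L,L,H] d1001 ({0,1,3} : Finset (Fin 4)) (by decide) 0 (by decide) L (by simp)
      rw [upd0] at hc7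
      have hc8 := hcon ![L,H,H,L] d0110 ({1,2,3} : Finset (Fin 4)) (by decide) 2 (by decide) L (by simp)
      rw [upd2] at hc8
      have hc9 := hcon ![L,L,L,H] d0001 ({0,2} : Finset (Fin 4)) (by decide) 0 (by decide) H (by simp)
      rw [upd0] at hc9
      have hc10 := hcon ![L,H,L,L] d0100 ({0,2,3} : Finset (Fin 4)) (by decide) 0 (by decide) H (by simp)
      rw [upd0] at hc10
      have hc11 := hcon ![H,L,L,L] d1000 ({1,3} : Finset (Fin 4)) (by decide) 3 (by decide) H (by simp)
      rw [upd3] at hc11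
      have hc12 := hcon ![H,H,L,L] d1100 ({0,2} : Finset (Fin 4)) (by decide) 0 (by decide) L (by simp)
      rw [upd0] at hc12
      have hc13 := hcon ![L,L,H,H] d0011 ({1,2} : Finset (Fin 4)) (by decide) 2 (by decide) L (by simp)
      rw [upd2] at hc13
      have hc14 := hcon ![L,L,L,H] d0001 ({0,1,2} : Finset (Fin 4)) (by decide) 2 (by decide) H (by simp)
      rw [upd2] at hc14
      have hc15 := hcon ![L,L,L,H] d0001 ({2,3} : Finset (Fin 4)) (by decide) 2 (by decide) H (by simp)
      rw [upd2] at hc15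
      have hc16 := hcon ![H,L,H,H] d1011 ({0,1} : Finset (Fin 4)) (by decide) 0 (by decide) L (by simp)
      rw [upd0] at hc16
      have hc17 := hcon ![L,L,H,H] d0011 ({0,2} : Finset (Fin 4)) (by decide) 2 (by decide) L (by simp)
      rw [upd2] at hc17
      have hc18 := hcon ![H,L,H,H] d1011 ({0,3} : Finset (Fin 4)) (by decide) 0 (by decide) L (by simp)
      rw [upd0] at hc18
      have hc19 := hcon ![L,H,L,L] d0100 ({2} : Finset (Fin 4)) (by decide) 2 (by decide) H (by simp)
      rw [upd2] at hc19
      have hc20 := hcon ![L,H,L,L] d0100 ({0,1,2} : Finset (Fin 4)) (by decide) 0 (by decide) H (by simp)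
      rw [upd0] at hc20
      simp only [utility, Finset.sum_singleton, sum01, sum012, sum013, sum02, sum023, sum03, sum12, sum123, sum13, sum23, a0001, a0010, a0011, a0100, a0110, a1000, a1001, a1011, a1100, Matrix.cons_val_zero, Matrix.cons_val_one, Matrix.head_cons, Matrix.cons_val_two, Matrix.cons_val_three, Matrix.tail_cons, one_mul, zero_mul] at hc0 hc1 hc2 hc3 hc4 hc5 hc6 hc7 hc8 hc9 hc10 hc11 hc12 hc13 hc14 hc15 hc16 hc17 hc18 hc19 hc20
      linarith
  · rcases hfeas ![H,L,L,H] d1001 with a1001 | a1001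
    · have hc0 := hcon ![H,H,L,L] d1100 ({1} : Finset (Fin 4)) (by decide) 1 (by decide) L (by simp)
      rw [upd1] at hc0
      have hc1 := hcon ![H,L,L,H] d1001 ({0,1} : Finset (Fin 4)) (by decide) 0 (by decide) L (by simp)
      rw [upd0] at hc1
      have hc2 := hcon ![H,H,L,L] d1100 ({0,2} : Finset (Fin 4)) (by decide) 0 (by decide) L (by simp)
      rw [upd0] at hc2
      have hc3 := hcon ![L,H,H,L] d0110 ({0,2,3} : Finset (Fin 4)) (by decide) 3 (by decide) H (by simp)
      rw [upd3] at hc3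
      have hc4 := hcon ![L,L,H,H] d0011 ({0,2} : Finset (Fin 4)) (by decide) 2 (by decide) L (by simp)
      rw [upd2] at hc4
      have hc5 := hcon ![L,H,H,H] d0111 ({1,2} : Finset (Fin 4)) (by decide) 1 (by decide) L (by simp)
      rw [upd1] at hc5
      have hc6 := hcon ![L,H,H,H] d0111 ({0,1} : Finset (Fin 4)) (by decide) 1 (by decide) L (by simp)
      rw [upd1] at hc6
      have hc7 := hcon ![L,L,H,H] d0011 ({1,3} : Finset (Fin 4)) (by decide) 3 (by decide) L (by simp)
      rw [upd3] at hc7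
      have hc8 := hcon ![L,H,L,L] d0100 ({2} : Finset (Fin 4)) (by decide) 2 (by decide) H (by simp)
      rw [upd2] at hc8
      have hc9 := hcon ![L,L,L,H] d0001 ({0,1,2} : Finset (Fin 4)) (by decide) 2 (by decide) H (by simp)
      rw [upd2] at hc9
      have hc10 := hcon ![L,L,L,H] d0001 ({0} : Finset (Fin 4)) (by decide) 0 (by decide) H (by simp)
      rw [upd0] at hc10
      have hc11 := hcon ![L,L,L,H] d0001 ({0,2} : Finset (Fin 4)) (by decide) 0 (by decide) H (by simp)
      rw [upd0] at hc11
      have hc12 := hcon ![L,H,L,L] d0100 ({0,1,2} : Finset (Fin 4)) (by decide) 2 (by decide) H (by simp)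
      rw [upd2] at hc12
      have hc13 := hcon ![H,L,L,L] d1000 ({0,1} : Finset (Fin 4)) (by decide) 1 (by decide) H (by simp)
      rw [upd1] at hc13
      have hc14 := hcon ![H,L,L,L] d1000 ({1,3} : Finset (Fin 4)) (by decide) 3 (by decide) H (by simp)
      rw [upd3] at hc14
      have hc15 := hcon ![H,L,L,L] d1000 ({1,2} : Finset (Fin 4)) (by decide) 1 (by decide) H (by simp)
      rw [upd1] at hc15
      have hc16 := hcon ![L,L,H,H] d0011 ({1} : Finset (Fin 4)) (by decide) 1 (by decide) H (by simp)
      rw [upd1] at hc16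
      have hc17 := hcon ![L,H,L,L] d0100 ({0,1,2} : Finset (Fin 4)) (by decide) 0 (by decide) H (by simp)
      rw [upd0] at hc17
      have hc18 := hcon ![L,H,H,H] d0111 ({1,3} : Finset (Fin 4)) (by decide) 1 (by decide) L (by simp)
      rw [upd1] at hc18
      have hc19 := hcon ![L,L,H,L] d0010 ({1,3} : Finset (Fin 4)) (by decide) 1 (by decide) H (by simp)
      rw [upd1] at hc19
      have hc20 := hcon ![L,H,H,L] d0110 ({1,2} : Finset (Fin 4)) (by decide) 2 (by decide) L (by simp)
      rw [upd2] at hc20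
      have hc21 := hcon ![H,L,L,H] d1001 ({0,2,3} : Finset (Fin 4)) (by decide) 3 (by decide) L (by simp)
      rw [upd3] at hc21
      simp only [utility, Finset.sum_singleton, sum01, sum012, sum02, sum023, sum12, sum13, a0001, a0010, a0011, a0100, a0110, a0111, a1000, a1001, a1100, Matrix.cons_val_zero, Matrix.cons_val_one, Matrix.head_cons, Matrix.cons_val_two, Matrix.cons_val_three, Matrix.tail_cons, one_mul, zero_mul] at hc0 hc1 hc2 hc3 hc4 hc5 hc6 hc7 hc8 hc9 hc10 hc11 hc12 hc13 hc14 hc15 hc16 hc17 hc18 hc19 hc20 hc21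
      linarith
    · have hc0 := hcon ![L,H,H,L] d0110 ({0,1,2} : Finset (Fin 4)) (by decide) 1 (by decide) L (by simp)
      rw [upd1] at hc0
      have hc1 := hcon ![H,L,L,L] d1000 ({1,2} : Finset (Fin 4)) (by decide) 1 (by decide) H (by simp)
      rw [upd1] at hc1
      have hc2 := hcon ![L,L,H,L] d0010 ({0,3} : Finset (Fin 4)) (by decide) 3 (by decide) H (by simp)
      rw [upd3] at hc2
      have hc3 := hcon ![L,H,H,L] d0110 ({0,2,3} : Finset (Fin 4)) (by decide) 3 (by decide) H (by simp)
      rw [upd3] at hc3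
      have hc4 := hcon ![L,L,H,H] d0011 ({0,2} : Finset (Fin 4)) (by decide) 2 (by decide) L (by simp)
      rw [upd2] at hc4
      have hc5 := hcon ![L,L,H,H] d0011 ({1,3} : Finset (Fin 4)) (by decide) 3 (by decide) L (by simp)
      rw [upd3] at hc5
      have hc6 := hcon ![L,H,H,H] d0111 ({0,1} : Finset (Fin 4)) (by decide) 1 (by decide) L (by simp)
      rw [upd1] at hc6
      have hc7 := hcon ![L,L,H,H] d0011 ({2,3} : Finset (Fin 4)) (by decide) 3 (by decide) L (by simp)
      rw [upd3] at hc7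
      have hc8 := hcon ![H,H,L,L] d1100 ({1} : Finset (Fin 4)) (by decide) 1 (by decide) L (by simp)
      rw [upd1] at hc8
      have hc9 := hcon ![L,L,H,L] d0010 ({1,2,3} : Finset (Fin 4)) (by decide) 3 (by decide) H (by simp)
      rw [upd3] at hc9
      have hc10 := hcon ![L,H,H,H] d0111 ({1,2} : Finset (Fin 4)) (by decide) 1 (by decide) L (by simp)
      rw [upd1] at hc10
      have hc11 := hcon ![L,H,L,L] d0100 ({0,2} : Finset (Fin 4)) (by decide) 2 (by decide) H (by simp)
      rw [upd2] at hc11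
      have hc12 := hcon ![L,L,H,H] d0011 ({1} : Finset (Fin 4)) (by decide) 1 (by decide) H (by simp)
      rw [upd1] at hc12
      have hc13 := hcon ![L,L,H,L] d0010 ({1,3} : Finset (Fin 4)) (by decide) 1 (by decide) H (by simp)
      rw [upd1] at hc13
      have hc14 := hcon ![H,L,L,H] d1001 ({2,3} : Finset (Fin 4)) (by decide) 3 (by decide) L (by simp)
      rw [upd3] at hc14
      have hc15 := hcon ![L,L,L,H] d0001 ({0,2} : Finset (Fin 4)) (by decide) 0 (by decide) H (by simp)
      rw [upd0] at hc15
      have hc16 := hcon ![H,L,L,L] d1000 ({3} : Finset (Fin 4)) (by decide) 3 (by decide) H (by simp)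
      rw [upd3] at hc16
      have hc17 := hcon ![H,H,L,L] d1100 ({0,2} : Finset (Fin 4)) (by decide) 0 (by decide) L (by simp)
      rw [upd0] at hc17
      have hc18 := hcon ![H,L,L,L] d1000 ({0,1} : Finset (Fin 4)) (by decide) 1 (by decide) H (by simp)
      rw [upd1] at hc18
      have hc19 := hcon ![L,H,H,H] d0111 ({1,3} : Finset (Fin 4)) (by decide) 1 (by decide) L (by simp)
      rw [upd1] at hc19
      have hc20 := hcon ![H,L,L,H] d1001 ({0,3} : Finset (Fin 4)) (by decide) 3 (by decide) L (by simp)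
      rw [upd3] at hc20
      simp only [utility, Finset.sum_singleton, sum01, sum012, sum02, sum023, sum03, sum12, sum123, sum13, sum23, a0001, a0010, a0011, a0100, a0110, a0111, a1000, a1001, a1100, Matrix.cons_val_zero, Matrix.cons_val_one, Matrix.head_cons, Matrix.cons_val_two, Matrix.cons_val_three, Matrix.tail_cons, one_mul, zero_mul] at hc0 hc1 hc2 hc3 hc4 hc5 hc6 hc7 hc8 hc9 hc10 hc11 hc12 hc13 hc14 hc15 hc16 hc17 hc18 hc19 hc20
      linarith
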